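/- Let y(i), b_k(i) ∈ ℝ³ for i = 1,…,N, k = 1,…,K, let w_i > 0 with Σ_i w_i > 0, and λ > 0; define the cost J(R, t, c) = Σ_{i=1}^N w_i ‖y(i) − R Σ_k c_k b_k(i) − t‖² + λ‖c‖² over the feasible set SO(3) × ℝ³ × {c ∈ ℝ^K : 𝟏ᵀc = 1}. With the centered quantities ȳ(i) = √w_i (y(i) − y_w), b̄_k(i) = √w_i(b_k(i) − b_{k,w}) (where y_w, b_{k,w} are the weighted centroids), stacked ȳ ∈ ℝ^{3N} and B̄ ∈ ℝ^{3N×K}, define the reduced rotation cost F(R) = min_{c : 𝟏ᵀc = 1} ‖B̄c − (I_N ⊗ Rᵀ)ȳ‖² + λ‖c‖². If R* ∈ SO(3) globally minimizes F over SO(3), c* = 2G B̄ᵀ(I_N ⊗ (R*)ᵀ)ȳ + g (with G, g built from H̄ = 2(B̄ᵀB̄ + λI_K) as G = H̄⁻¹ − (H̄⁻¹𝟏𝟏ᵀH̄⁻¹)/(𝟏ᵀH̄⁻¹𝟏) and g = (H̄⁻¹𝟏)/(𝟏ᵀH̄⁻¹𝟏)), and t* = y_w − R* Σ_k c*_k b_{k,w},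 then (R*, t*, c*) is a global minimizer of J over SO(3) × ℝ³ × {c : 𝟏ᵀc = 1}. -/

import Mathlib

/-
For orthogonal `R` the cost splits as
  `J(R,t,c) = ‖B̄c - (I_N ⊗ Rᵀ)ȳ‖² + λ‖c‖² + (Σᵢ wᵢ) ‖y_w - R Σₖ cₖ b_{k,w} - t‖²`:
apply the weighted parallel-axis identity to the residuals `y(i) - R Σₖ cₖ bₖ(i)` about their
weighted centroid, absorb `wᵢ` as `√wᵢ` into the centered data, and rotate each block by `Rᵀ`.
The last term vanishes at `t*`. The first part is a convex quadratic in `c`, and `c*` satisfies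
its Lagrange condition `H̄ c* = 2 B̄ᵀ z + ν 𝟏` on the hyperplane `𝟏ᵀc = 1`, so it attains
`F(R*)`. Hence `J(R*,t*,c*) = F(R*) ≤ F(R) ≤ J(R,t,c)`.
-/

open Matrix Finset Kronecker

noncomputable section

/-- The Euclidean space `ℝ³`. -/
abbrev E3 : Type := EuclideanSpace ℝ (Fin 3)

/-- Action of a `3×3` matrix on a vector of `ℝ³`. -/
def mv (R : Matrix (Fin 3) (Fin 3) ℝ) (v : E3) : E3 := WithLp.toLp 2 (R.mulVec v)

/-- `R ∈ SO(3)`: `RᵀR = I₃` and `det R = 1`. -/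
def SO3 (R : Matrix (Fin 3) (Fin 3) ℝ) : Prop := Rᵀ * R = 1 ∧ R.det = 1

/-- View a plain tuple as a point of Euclidean space (so that `‖·‖` is the Euclidean norm). -/
def toE {ι : Type} [Fintype ι] (v : ι → ℝ) : EuclideanSpace ℝ ι := WithLp.toLp 2 v

/-- Entry of a vector of `ℝ³`. -/
def entry (v : E3) (a : Fin 3) : ℝ := v a

/-- The regularized nonlinear least-squares cost `J(R,t,c)`. -/
def J {N K : ℕ} (y : Fin N → E3) (b : Fin K → Fin N → E3) (w : Fin N → ℝ) (lam : ℝ)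
    (R : Matrix (Fin 3) (Fin 3) ℝ) (t : E3) (c : Fin K → ℝ) : ℝ :=
  ∑ i, w i * ‖y i - mv R (∑ k, c k • b k i) - t‖ ^ 2 + lam * ‖toE c‖ ^ 2

theorem norm_toE_sq {ι : Type} [Fintype ι] (v : ι → ℝ) : ‖toE v‖ ^ 2 = v ⬝ᵥ v := by
  rw [EuclideanSpace.real_norm_sq_eq]
  simp [toE, dotProduct, sq]

theorem mv_eq_toLpLin (R : Matrix (Fin 3) (Fin 3) ℝ) : mv R = Matrix.toLpLin 2 2 R := rfl

theorem mv_mv (R S : Matrix (Fin 3) (Fin 3) ℝ) (v : E3) : mv R (mv S v) = mv (R * S) v := by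
  simp [mv, mulVec_mulVec]

theorem norm_mv_of_transpose_mul_self {Q : Matrix (Fin 3) (Fin 3) ℝ} (hQ : Qᵀ * Q = 1) (v : E3) :
    ‖mv Q v‖ = ‖v‖ := by
  have h : ‖mv Q v‖ ^ 2 = ‖v‖ ^ 2 := by
    change ‖toE (Q *ᵥ v.ofLp)‖ ^ 2 = ‖toE v.ofLp‖ ^ 2
    rw [norm_toE_sq, norm_toE_sq, dotProduct_mulVec, ← mulVec_transpose, mulVec_mulVec, hQ,
      one_mulVec]
  exact (sq_eq_sq₀ (norm_nonneg _) (norm_nonneg _)).1 h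

theorem norm_mv_transpose_sub {R : Matrix (Fin 3) (Fin 3) ℝ} (hR : Rᵀ * R = 1) (x v : E3) :
    ‖mv Rᵀ x - v‖ = ‖x - mv R v‖ := by
  have hRRt : Rᵀᵀ * Rᵀ = 1 := by rw [transpose_transpose]; exact mul_eq_one_comm.mp hR
  have hv : v = mv Rᵀ (mv R v) := by rw [mv_mv, hR]; simp [mv]
  rw [hv, mv_eq_toLpLin, ← map_sub, ← mv_eq_toLpLin, norm_mv_of_transpose_mul_self hRRt, ← hv]

/-- `ȳ = stack ȳ(·)` in the paper, and the `k`-th column of `B̄` is `stack b̄ₖ(·)`. -/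
def stack {ι κ : Type} (u : ι → EuclideanSpace ℝ κ) : ι × κ → ℝ := fun p => u p.1 p.2

theorem norm_toE_stack_sq {ι κ : Type} [Fintype ι] [Fintype κ] (u : ι → EuclideanSpace ℝ κ) :
    ‖toE (stack u)‖ ^ 2 = ∑ i, ‖u i‖ ^ 2 := by
  simp [EuclideanSpace.real_norm_sq_eq, toE, stack, Fintype.sum_prod_type]

theorem one_kronecker_mulVec_stack {ι : Type} [Fintype ι] [DecidableEq ι]
    (M : Matrix (Fin 3) (Fin 3) ℝ) (u : ι → E3) :
    ((1 : Matrix ι ι ℝ) ⊗ₖ M) *ᵥ stack u = stack fun i => mv M (u i) := by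
  ext ⟨i, a⟩
  simp [stack, mv, mulVec, dotProduct, kroneckerMap_apply, Fintype.sum_prod_type, one_apply]

theorem of_stack_mulVec {ι κ : Type} [Fintype κ] (u : κ → ι → E3) (c : κ → ℝ) :
    (of fun p k => stack (u k) p) *ᵥ c = stack fun i => ∑ k, c k • u k i := by
  ext ⟨i, a⟩
  simp [stack, mulVec, dotProduct, mul_comm]

theorem stack_sub {ι κ : Type} (u v : ι → EuclideanSpace ℝ κ) :
    stack (u - v) = stack u - stack v := rfl

section WeightedMean

variable {ι E : Type*} [Fintype ι]

theorem sum_smul_sub_weightedMean [AddCommGroup E] [Module ℝ E] {w : ι → ℝ}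
    (hw : ∑ i, w i ≠ 0) (x : ι → E) :
    ∑ i, w i • (x i - (∑ j, w j)⁻¹ • ∑ j, w j • x j) = 0 := by
  simp_rw [smul_sub]
  rw [Finset.sum_sub_distrib, ← Finset.sum_smul, smul_smul, mul_inv_cancel₀ hw, one_smul, sub_self]

/-- Weighted parallel-axis identity; `hm` says that `m` is the weighted centroid of `x`. -/
theorem sum_mul_norm_sub_sq_of_sum_smul_sub_eq_zero [NormedAddCommGroup E]
    [InnerProductSpace ℝ E] {w : ι → ℝ} {x : ι → E} {m : E} (hm : ∑ i, w i • (x i - m) = 0)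
    (t : E) :
    ∑ i, w i * ‖x i - t‖ ^ 2 = ∑ i, w i * ‖x i - m‖ ^ 2 + (∑ i, w i) * ‖m - t‖ ^ 2 := by
  have hcross : ∑ i, w i * inner ℝ (x i - m) (m - t) = 0 := by
    simp_rw [← real_inner_smul_left, ← sum_inner, hm, inner_zero_left]
  have hsplit : ∀ i, x i - t = (x i - m) + (m - t) := fun i => (sub_add_sub_cancel _ _ _).symm
  simp_rw [hsplit, norm_add_sq_real, mul_add, Finset.sum_add_distrib, Finset.sum_mul]
  simp only [mul_left_comm _ (2 : ℝ), ← Finset.mul_sum, hcross, mul_zero, add_zero]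

end WeightedMean

section Lagrange

variable {ι : Type*} [Fintype ι] [DecidableEq ι] {H G : Matrix ι ι ℝ} {a g : ι → ℝ}

theorem dotProduct_mulVec_add_eq_one (hα : a ⬝ᵥ H⁻¹ *ᵥ a ≠ 0)
    (hG : G = H⁻¹ - (a ⬝ᵥ H⁻¹ *ᵥ a)⁻¹ • (H⁻¹ * vecMulVec a a * H⁻¹))
    (hg : g = (a ⬝ᵥ H⁻¹ *ᵥ a)⁻¹ • H⁻¹ *ᵥ a) (q : ι → ℝ) :
    a ⬝ᵥ (G *ᵥ q + g) = 1 := by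
  have haG : a ᵥ* G = 0 := by
    rw [hG, vecMul_sub, vecMul_smul, ← vecMul_vecMul, ← vecMul_vecMul, vecMul_vecMulVec,
      ← dotProduct_mulVec, smul_vecMul, smul_smul, inv_mul_cancel₀ hα, one_smul, sub_self]
  rw [dotProduct_add, dotProduct_mulVec, haG, zero_dotProduct, zero_add, hg, dotProduct_smul,
    smul_eq_mul, inv_mul_cancel₀ hα]

theorem mulVec_mulVec_add_eq (hH : IsUnit H.det)
    (hG : G = H⁻¹ - (a ⬝ᵥ H⁻¹ *ᵥ a)⁻¹ • (H⁻¹ * vecMulVec a a * H⁻¹))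
    (hg : g = (a ⬝ᵥ H⁻¹ *ᵥ a)⁻¹ • H⁻¹ *ᵥ a) (q : ι → ℝ) :
    H *ᵥ (G *ᵥ q + g) = q + ((a ⬝ᵥ H⁻¹ *ᵥ a)⁻¹ * (1 - a ⬝ᵥ H⁻¹ *ᵥ q)) • a := by
  have hHG : H * G = 1 - (a ⬝ᵥ H⁻¹ *ᵥ a)⁻¹ • (vecMulVec a a * H⁻¹) := by
    rw [hG, Matrix.mul_sub, mul_nonsing_inv _ hH, Matrix.mul_smul, ← Matrix.mul_assoc,
      ← Matrix.mul_assoc, mul_nonsing_inv _ hH, Matrix.one_mul]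
  rw [mulVec_add, mulVec_mulVec, hHG, hg, mulVec_smul, mulVec_mulVec, mul_nonsing_inv _ hH,
    one_mulVec, sub_mulVec, one_mulVec, smul_mulVec, ← mulVec_mulVec, vecMulVec_mulVec,
    op_smul_eq_smul]
  ext i
  simp only [Pi.add_apply, Pi.sub_apply, Pi.smul_apply, smul_eq_mul]
  ring

end Lagrange

/-- `F(R)` is the infimum of `ridgeCost B̄ λ ((I_N ⊗ Rᵀ) ȳ)` over `𝟏ᵀc = 1`. -/
def ridgeCost {P ι : Type} [Fintype P] [Fintype ι] (B : Matrix P ι ℝ) (lam : ℝ) (z : P → ℝ)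
    (c : ι → ℝ) : ℝ :=
  ‖toE (B *ᵥ c - z)‖ ^ 2 + lam * ‖toE c‖ ^ 2

theorem ridgeCost_nonneg {P ι : Type} [Fintype P] [Fintype ι] (B : Matrix P ι ℝ) {lam : ℝ}
    (hlam : 0 ≤ lam) (z : P → ℝ) (c : ι → ℝ) : 0 ≤ ridgeCost B lam z c := by
  unfold ridgeCost
  positivity

section Ridge

variable {P ι : Type} [Fintype P] [Fintype ι] [DecidableEq ι]

/-- On the hyperplane `a ⬝ᵥ c = a ⬝ᵥ c₀` the Lagrange condition kills the linear term of
`ridgeCost (c₀ + d)`, and the quadratic term is nonnegative. -/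
theorem ridgeCost_le_of_lagrange (B : Matrix P ι ℝ) {lam : ℝ} (hlam : 0 ≤ lam) (z : P → ℝ)
    {a c₀ : ι → ℝ} {ν : ℝ} (hc₀ : (Bᵀ * B + lam • 1) *ᵥ c₀ = Bᵀ *ᵥ z + ν • a) {c : ι → ℝ}
    (hc : a ⬝ᵥ c = a ⬝ᵥ c₀) :
    ridgeCost B lam z c₀ ≤ ridgeCost B lam z c := by
  obtain ⟨d, rfl⟩ : ∃ d, c = c₀ + d := ⟨c - c₀, (add_sub_cancel _ _).symm⟩
  have had : a ⬝ᵥ d = 0 := by rwa [dotProduct_add, add_eq_left] at hc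
  have hlin : (B *ᵥ c₀ - z) ⬝ᵥ B *ᵥ d + lam * (c₀ ⬝ᵥ d) = 0 := by
    have h := congrArg (· ⬝ᵥ d) hc₀
    simp only [add_mulVec, ← mulVec_mulVec, smul_mulVec, one_mulVec, add_dotProduct,
      smul_dotProduct, mulVec_transpose, ← dotProduct_mulVec, had, smul_eq_mul, mul_zero,
      add_zero] at h
    rw [sub_dotProduct]
    linarith
  have hd : 0 ≤ ‖toE (B *ᵥ d)‖ ^ 2 + lam * ‖toE d‖ ^ 2 := by positivity
  rw [norm_toE_sq, norm_toE_sq] at hd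
  unfold ridgeCost
  rw [norm_toE_sq, norm_toE_sq, norm_toE_sq, norm_toE_sq, mulVec_add, add_sub_right_comm]
  simp only [add_dotProduct, dotProduct_add, dotProduct_comm (B *ᵥ d), dotProduct_comm d] at hd ⊢
  nlinarith

theorem posDef_two_smul_transpose_mul_self_add (B : Matrix P ι ℝ) {lam : ℝ} (hlam : 0 < lam) :
    ((2 : ℝ) • (Bᵀ * B + lam • (1 : Matrix ι ι ℝ))).PosDef := by
  have hgram : (Bᵀ * B).PosSemidef := by
    rw [← conjTranspose_eq_transpose_of_trivial]
    exact posSemidef_conjTranspose_mul_self B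
  exact (PosDef.posSemidef_add hgram (PosDef.one.smul hlam)).smul two_pos

theorem ridgeCost_le_of_closed_form (B : Matrix P ι ℝ) {lam : ℝ} (hlam : 0 < lam) (z : P → ℝ)
    {a : ι → ℝ} (ha : a ≠ 0) {H G : Matrix ι ι ℝ} {g : ι → ℝ}
    (hH : H = (2 : ℝ) • (Bᵀ * B + lam • (1 : Matrix ι ι ℝ)))
    (hG : G = H⁻¹ - (a ⬝ᵥ H⁻¹ *ᵥ a)⁻¹ • (H⁻¹ * vecMulVec a a * H⁻¹))
    (hg : g = (a ⬝ᵥ H⁻¹ *ᵥ a)⁻¹ • H⁻¹ *ᵥ a) :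
    a ⬝ᵥ ((2 : ℝ) • G *ᵥ (Bᵀ *ᵥ z) + g) = 1 ∧ ∀ c, a ⬝ᵥ c = 1 →
      ridgeCost B lam z ((2 : ℝ) • G *ᵥ (Bᵀ *ᵥ z) + g) ≤ ridgeCost B lam z c := by
  have hPD : H.PosDef := hH ▸ posDef_two_smul_transpose_mul_self_add B hlam
  have hα : a ⬝ᵥ H⁻¹ *ᵥ a ≠ 0 := by
    simpa using (hPD.inv.dotProduct_mulVec_pos ha).ne'
  have hdet : IsUnit H.det := (isUnit_iff_isUnit_det _).mp hPD.isUnit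
  rw [← mulVec_smul]
  set c₀ := G *ᵥ ((2 : ℝ) • Bᵀ *ᵥ z) + g
  set ν := (a ⬝ᵥ H⁻¹ *ᵥ a)⁻¹ * (1 - a ⬝ᵥ H⁻¹ *ᵥ ((2 : ℝ) • Bᵀ *ᵥ z))
  have hone : a ⬝ᵥ c₀ = 1 := dotProduct_mulVec_add_eq_one hα hG hg _
  have hlagr : (Bᵀ * B + lam • 1) *ᵥ c₀ = Bᵀ *ᵥ z + (ν / 2) • a := by
    have hkkt : H *ᵥ c₀ = (2 : ℝ) • Bᵀ *ᵥ z + ν • a := mulVec_mulVec_add_eq hdet hG hg _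
    rw [hH, smul_mulVec] at hkkt
    ext i
    have hi := congrFun hkkt i
    simp only [Pi.smul_apply, Pi.add_apply, smul_eq_mul] at hi ⊢
    linarith
  exact ⟨hone, fun c hc => ridgeCost_le_of_lagrange B hlam.le z hlagr (hc.trans hone.symm)⟩

end Ridge

theorem J_eq_ridgeCost_add {N K : ℕ} (y : Fin N → E3) (b : Fin K → Fin N → E3) {w : Fin N → ℝ}
    (hw : ∀ i, 0 ≤ w i) (lam : ℝ) {yw : E3} {bw : Fin K → E3}
    (hyw : ∑ i, w i • (y i - yw) = 0) (hbw : ∀ k, ∑ i, w i • (b k i - bw k) = 0)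
    {ybarpt : Fin N → E3} (hybarpt : ∀ i, ybarpt i = Real.sqrt (w i) • (y i - yw))
    {bbar : Fin K → Fin N → E3} (hbbar : ∀ k i, bbar k i = Real.sqrt (w i) • (b k i - bw k))
    {R : Matrix (Fin 3) (Fin 3) ℝ} (hR : Rᵀ * R = 1) (t : E3) (c : Fin K → ℝ) :
    J y b w lam R t c
      = ridgeCost (of fun p k => stack (bbar k) p) lam
          (((1 : Matrix (Fin N) (Fin N) ℝ) ⊗ₖ Rᵀ) *ᵥ stack ybarpt) c
        + (∑ i, w i) * ‖yw - mv R (∑ k, c k • bw k) - t‖ ^ 2 := by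
  set x : Fin N → E3 := fun i => y i - mv R (∑ k, c k • b k i)
  set m : E3 := yw - mv R (∑ k, c k • bw k)
  have hxm : ∀ i, x i - m = (y i - yw) - mv R (∑ k, c k • (b k i - bw k)) := by
    intro i
    simp only [x, m, mv_eq_toLpLin, smul_sub, Finset.sum_sub_distrib, map_sub]
    abel
  have hrot : ∑ i, w i • mv R (∑ k, c k • (b k i - bw k)) = 0 := by
    simp only [mv_eq_toLpLin, ← map_smul, ← map_sum, Finset.smul_sum, smul_comm (w _) (c _)]
    rw [Finset.sum_comm]
    simp only [← Finset.smul_sum, hbw, smul_zero, Finset.sum_const_zero, map_zero]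
  have hm : ∑ i, w i • (x i - m) = 0 := by
    simp only [hxm, smul_sub (w _) (y _ - yw), Finset.sum_sub_distrib, hyw, hrot, sub_zero]
  have hscaled : ∀ i, w i * ‖x i - m‖ ^ 2 = ‖∑ k, c k • bbar k i - mv Rᵀ (ybarpt i)‖ ^ 2 := by
    intro i
    have hsqrt : Real.sqrt (w i) • (x i - m) = ybarpt i - mv R (∑ k, c k • bbar k i) := by
      simp only [hxm, hybarpt, hbbar, mv_eq_toLpLin, smul_sub, ← map_smul, Finset.smul_sum,
        smul_comm (Real.sqrt (w i)) (c _)]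
    rw [norm_sub_rev (∑ k, _), norm_mv_transpose_sub hR, ← hsqrt, norm_smul, mul_pow,
      Real.norm_eq_abs, sq_abs, Real.sq_sqrt (hw i)]
  unfold ridgeCost
  rw [of_stack_mulVec, one_kronecker_mulVec_stack, ← stack_sub, norm_toE_stack_sq]
  change ∑ i, w i * ‖x i - t‖ ^ 2 + lam * ‖toE c‖ ^ 2 = _
  rw [sum_mul_norm_sub_sq_of_sum_smul_sub_eq_zero hm, Finset.sum_congr rfl fun i _ => hscaled i]
  simp only [Pi.sub_apply]
  ring

theorem sInf_setOf_exists_eq_of_le {α : Type*} {p : α → Prop} {f : α → ℝ} {a : α} (ha : p a)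
    (h : ∀ c, p c → f a ≤ f c) : sInf {v | ∃ c, p c ∧ v = f c} = f a :=
  IsLeast.csInf_eq ⟨⟨a, ha, rfl⟩, by rintro _ ⟨c, hc, rfl⟩; exact h c hc⟩

theorem sInf_setOf_exists_le {α : Type*} {p : α → Prop} {f : α → ℝ} (hf : ∀ c, 0 ≤ f c) {c : α}
    (hc : p c) : sInf {v | ∃ c, p c ∧ v = f c} ≤ f c :=
  csInf_le ⟨0, by rintro _ ⟨c, -, rfl⟩; exact hf c⟩ ⟨c, hc, rfl⟩

/-- optimality of `PACE⋆`: if `R*` globally minimizes the reduced rotation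
cost `F` over `SO(3)`, `c*` is the closed-form optimal shape for `R*`, and `t*` is the
closed-form optimal translation for `(R*, c*)`, then `(R*, t*, c*)` globally minimizes the
full cost `J` over `SO(3) × ℝ³ × {c : 𝟏ᵀc = 1}`. -/
theorem pace_star_global_optimality (N K : ℕ) (hK : 0 < K)
    (y : Fin N → E3) (b : Fin K → Fin N → E3)
    (w : Fin N → ℝ) (hw : ∀ i, 0 < w i) (hwsum : 0 < ∑ i, w i)
    (lam : ℝ) (hlam : 0 < lam)
    (yw : E3) (hyw : yw = (∑ i, w i)⁻¹ • ∑ i, w i • y i)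
    (bw : Fin K → E3) (hbw : ∀ k, bw k = (∑ i, w i)⁻¹ • ∑ i, w i • b k i)
    (ybarpt : Fin N → E3) (hybarpt : ∀ i, ybarpt i = Real.sqrt (w i) • (y i - yw))
    (bbar : Fin K → Fin N → E3)
    (hbbar : ∀ k i, bbar k i = Real.sqrt (w i) • (b k i - bw k))
    (ybar : Fin N × Fin 3 → ℝ) (hybar : ybar = fun p => entry (ybarpt p.1) p.2)
    (B : Matrix (Fin N × Fin 3) (Fin K) ℝ) (hB : B = of fun p k => entry (bbar k p.1) p.2)
    (F : Matrix (Fin 3) (Fin 3) ℝ → ℝ)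
    (hF : ∀ R, F R = sInf {v : ℝ | ∃ c : Fin K → ℝ, ∑ k, c k = 1 ∧
      v = ‖toE (B.mulVec c - ((1 : Matrix (Fin N) (Fin N) ℝ) ⊗ₖ Rᵀ).mulVec ybar)‖ ^ 2
            + lam * ‖toE c‖ ^ 2})
    (Hbar : Matrix (Fin K) (Fin K) ℝ)
    (hHbar : Hbar = (2 : ℝ) • (Bᵀ * B + lam • (1 : Matrix (Fin K) (Fin K) ℝ)))
    (ones : Fin K → ℝ) (hones : ones = fun _ => 1)
    (G : Matrix (Fin K) (Fin K) ℝ)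
    (hG : G = Hbar⁻¹ -
      (ones ⬝ᵥ (Hbar⁻¹).mulVec ones)⁻¹ • (Hbar⁻¹ * vecMulVec ones ones * Hbar⁻¹))
    (g : Fin K → ℝ)
    (hg : g = (ones ⬝ᵥ (Hbar⁻¹).mulVec ones)⁻¹ • (Hbar⁻¹).mulVec ones)
    (Rstar : Matrix (Fin 3) (Fin 3) ℝ) (hRstarSO3 : SO3 Rstar)
    (hRstarOpt : ∀ R, SO3 R → F Rstar ≤ F R)
    (cstar : Fin K → ℝ)
    (hcstar : cstar = (2 : ℝ) • G.mulVec
      (Bᵀ.mulVec (((1 : Matrix (Fin N) (Fin N) ℝ) ⊗ₖ Rstarᵀ).mulVec ybar)) + g)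
    (tstar : E3) (htstar : tstar = yw - mv Rstar (∑ k, cstar k • bw k)) :
    ∑ k, cstar k = 1 ∧
      ∀ (R : Matrix (Fin 3) (Fin 3) ℝ) (t : E3) (c : Fin K → ℝ),
        SO3 R → ∑ k, c k = 1 →
        J y b w lam Rstar tstar cstar ≤ J y b w lam R t c := by
  have hones_ne : ones ≠ 0 := fun h => by simpa [hones] using congrFun h ⟨0, hK⟩
  have hsum_eq : ∀ c : Fin K → ℝ, ones ⬝ᵥ c = ∑ k, c k := fun c => by simp [hones, dotProduct]
  obtain ⟨hcstar_one, hcstar_min⟩ := ridgeCost_le_of_closed_form B hlam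
    (((1 : Matrix (Fin N) (Fin N) ℝ) ⊗ₖ Rstarᵀ) *ᵥ ybar) hones_ne hHbar hG hg
  rw [← hcstar, hsum_eq] at hcstar_one
  simp only [← hcstar, hsum_eq] at hcstar_min
  have hdecomp : ∀ R, SO3 R → ∀ t c, J y b w lam R t c
      = ridgeCost B lam (((1 : Matrix (Fin N) (Fin N) ℝ) ⊗ₖ Rᵀ) *ᵥ ybar) c
        + (∑ i, w i) * ‖yw - mv R (∑ k, c k • bw k) - t‖ ^ 2 := by
    subst hB hybar
    exact fun R hR t c => J_eq_ridgeCost_add y b (fun i => (hw i).le) lam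
      (hyw ▸ sum_smul_sub_weightedMean hwsum.ne' y)
      (fun k => hbw k ▸ sum_smul_sub_weightedMean hwsum.ne' (b k)) hybarpt hbbar hR.1 t c
  refine ⟨hcstar_one, fun R t c hR hc => ?_⟩
  calc J y b w lam Rstar tstar cstar
      = ridgeCost B lam (((1 : Matrix (Fin N) (Fin N) ℝ) ⊗ₖ Rstarᵀ) *ᵥ ybar) cstar := by
        rw [hdecomp Rstar hRstarSO3, htstar, sub_self, norm_zero, zero_pow two_ne_zero, mul_zero,
          add_zero]
    _ = F Rstar := ((hF Rstar).trans (sInf_setOf_exists_eq_of_le hcstar_one hcstar_min)).symm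
    _ ≤ F R := hRstarOpt R hR
    _ ≤ ridgeCost B lam (((1 : Matrix (Fin N) (Fin N) ℝ) ⊗ₖ Rᵀ) *ᵥ ybar) c :=
        (hF R).trans_le (sInf_setOf_exists_le (ridgeCost_nonneg B hlam.le _) hc)
    _ ≤ J y b w lam R t c := by
        rw [hdecomp R hR]
        exact le_add_of_nonneg_right (mul_nonneg hwsum.le (sq_nonneg _))

end
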